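/- arXiv:2307.00200 — 5 statements merged into one kernel-verified Lean document; each statement's English description precedes it below -/
import Mathlib

section
/- Let M ≥ 2 be an integer and define f : [0, 2/M] → ℝ by f(x) = sin(πMx/2)/sin(πx/2) for x ∈ (0, 2/M] and f(0) = M. Then f is continuous on [0, 2/M], strictly decreasing on [0, 2/M], and f(2/M) = 0. -/
/-!
With `t = πx/2` the function is `sin (M t) / sin t = U_{M-1}(cos t)`, a continuous function of `t`
taking the value `M` at `0`. On `(0, π/M)` its derivative has the sign of
`g t = M cos (M t) sin t - sin (M t) cos t`; since `g 0 = 0` and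
`g' t = (1 - M²) sin (M t) sin t < 0` there, `g < 0`, so the quotient is strictly decreasing.
-/

open Real Polynomial Polynomial.Chebyshev Set

lemma hasDerivAt_mul_cos_mul_mul_sin_sub_sin_mul_mul_cos (k t : ℝ) :
    HasDerivAt (fun t => k * cos (k * t) * sin t - sin (k * t) * cos t)
      ((1 - k ^ 2) * (sin (k * t) * sin t)) t := by
  have hkt : HasDerivAt (fun t => k * t) k t := hasDerivAt_const_mul k
  have h := ((hkt.cos.const_mul k).mul (hasDerivAt_sin t)).sub (hkt.sin.mul (hasDerivAt_cos t))
  exact h.congr_deriv (by ring)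

lemma mul_cos_mul_mul_sin_sub_sin_mul_mul_cos_neg {k t : ℝ} (hk : 1 < k) (ht₀ : 0 < t)
    (ht : t < π / k) : k * cos (k * t) * sin t - sin (k * t) * cos t < 0 := by
  set g : ℝ → ℝ := fun t => k * cos (k * t) * sin t - sin (k * t) * cos t
  have hk₀ : 0 < k := one_pos.trans hk
  have hg_anti : StrictAntiOn g (Icc 0 (π / k)) := by
    refine strictAntiOn_of_deriv_neg (convex_Icc _ _) (by fun_prop) fun s hs => ?_
    rw [interior_Icc] at hs
    have hks : k * s < π := (lt_div_iff₀' hk₀).mp hs.2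
    have hs_lt : s < π := by nlinarith [hs.1]
    rw [(hasDerivAt_mul_cos_mul_mul_sin_sub_sin_mul_mul_cos k s).deriv]
    exact mul_neg_of_neg_of_pos (by nlinarith)
      (mul_pos (sin_pos_of_pos_of_lt_pi (by nlinarith [hs.1]) hks)
        (sin_pos_of_pos_of_lt_pi hs.1 hs_lt))
  have h0 : (0 : ℝ) ∈ Icc 0 (π / k) := ⟨le_rfl, by positivity⟩
  simpa [g] using hg_anti h0 ⟨ht₀.le, ht.le⟩ ht₀

/-- `sin (n t) / sin t`, written as `U_{n-1} (cos t)` so that it is also defined, continuously,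
at the zeros of `sin t`. -/
noncomputable def sinMulDivSin (n : ℕ) (t : ℝ) : ℝ :=
  (U ℝ ((n : ℤ) - 1)).eval (cos t)

lemma sinMulDivSin_mul_sin (n : ℕ) (t : ℝ) : sinMulDivSin n t * sin t = sin (n * t) := by
  rw [sinMulDivSin, U_real_cos]
  push_cast
  ring_nf

lemma sinMulDivSin_eq_div_sin (n : ℕ) {t : ℝ} (ht : sin t ≠ 0) :
    sinMulDivSin n t = sin (n * t) / sin t := by
  rw [eq_div_iff ht, sinMulDivSin_mul_sin]

@[simp]
lemma sinMulDivSin_zero (n : ℕ) : sinMulDivSin n 0 = n := by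
  simp [sinMulDivSin, U_eval_one]

@[fun_prop]
lemma continuous_sinMulDivSin (n : ℕ) : Continuous (sinMulDivSin n) := by
  unfold sinMulDivSin
  fun_prop

lemma deriv_sinMulDivSin_neg {n : ℕ} (hn : 2 ≤ n) {t : ℝ} (ht : t ∈ Ioo 0 (π / n)) :
    deriv (sinMulDivSin n) t < 0 := by
  have hn₁ : (1 : ℝ) < n := by exact_mod_cast hn
  have hπn : π / n < π := div_lt_self pi_pos hn₁
  have hsin_t : 0 < sin t := sin_pos_of_pos_of_lt_pi ht.1 (ht.2.trans hπn)
  have hsin_pos : ∀ s ∈ Ioo 0 π, sin s ≠ 0 := fun s hs =>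
    (sin_pos_of_pos_of_lt_pi hs.1 hs.2).ne'
  have hlocal : sinMulDivSin n =ᶠ[nhds t] fun s => sin (n * s) / sin s :=
    Filter.eventuallyEq_of_mem (Ioo_mem_nhds ht.1 (ht.2.trans hπn)) fun s hs =>
      sinMulDivSin_eq_div_sin n (hsin_pos s hs)
  have hderiv : HasDerivAt (fun s => sin (n * s) / sin s)
      ((n * cos (n * t) * sin t - sin (n * t) * cos t) / sin t ^ 2) t :=
    ((hasDerivAt_const_mul (n : ℝ)).sin.fun_div (hasDerivAt_sin t) hsin_t.ne').congr_deriv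
      (by ring)
  rw [hlocal.deriv_eq, hderiv.deriv]
  refine div_neg_of_neg_of_pos ?_ (pow_pos hsin_t 2)
  exact mul_cos_mul_mul_sin_sub_sin_mul_mul_cos_neg hn₁ ht.1 ht.2

lemma strictAntiOn_sinMulDivSin {n : ℕ} (hn : 2 ≤ n) :
    StrictAntiOn (sinMulDivSin n) (Icc 0 (π / n)) := by
  refine strictAntiOn_of_deriv_neg (convex_Icc _ _) (continuous_sinMulDivSin n).continuousOn ?_
  rw [interior_Icc]
  exact fun t ht => deriv_sinMulDivSin_neg hn ht

lemma pi_mul_div_two_mem_Icc {a x : ℝ} (hx : x ∈ Icc 0 (2 / a)) :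
    π * x / 2 ∈ Icc 0 (π / a) := by
  refine ⟨by nlinarith [pi_pos, hx.1], ?_⟩
  calc π * x / 2 ≤ π * (2 / a) / 2 := by gcongr; exact hx.2
    _ = π / a := by ring

/-- The IRS beamforming-gain function `f(x) = sin(πMx/2)/sin(πx/2)` on `(0, 2/M]`,
with `f(0) = M`, is continuous on `[0, 2/M]`, strictly decreasing there, and `f(2/M) = 0`. -/
theorem stmt_1 (M : ℕ) (hM : 2 ≤ M) (f : ℝ → ℝ)
    (hf : ∀ x ∈ Set.Ioc (0 : ℝ) (2 / (M : ℝ)),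
      f x = Real.sin (Real.pi * (M : ℝ) * x / 2) / Real.sin (Real.pi * x / 2))
    (hf0 : f 0 = (M : ℝ)) :
    ContinuousOn f (Set.Icc 0 (2 / (M : ℝ))) ∧
    StrictAntiOn f (Set.Icc 0 (2 / (M : ℝ))) ∧
    f (2 / (M : ℝ)) = 0 := by
  have hM₁ : (1 : ℝ) < M := by exact_mod_cast hM
  have hf_eq : EqOn f (fun x => sinMulDivSin M (π * x / 2)) (Icc 0 (2 / M)) := by
    rintro x hx
    rcases hx.1.eq_or_lt with rfl | hx₀
    · simp [hf0]
    · have hsin : 0 < sin (π * x / 2) := sin_pos_of_pos_of_lt_pi (by positivity)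
        ((pi_mul_div_two_mem_Icc hx).2.trans_lt (div_lt_self pi_pos hM₁))
      simp only [hf x ⟨hx₀, hx.2⟩, sinMulDivSin_eq_div_sin M hsin.ne']
      ring_nf
  have hcont : Continuous fun x => sinMulDivSin M (π * x / 2) := by fun_prop
  refine ⟨hcont.continuousOn.congr hf_eq, fun x hx y hy hxy => ?_, ?_⟩
  · rw [hf_eq hx, hf_eq hy]
    exact strictAntiOn_sinMulDivSin hM (pi_mul_div_two_mem_Icc hx) (pi_mul_div_two_mem_Icc hy)
      (by gcongr)
  · have hM₀ : (M : ℝ) ≠ 0 := by positivity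
    have hπ : π * M * (2 / M) / 2 = π := by field_simp
    rw [hf _ ⟨by positivity, le_rfl⟩, hπ, sin_pi, zero_div]
end

section
/- Let L ≥ M ≥ 2 be integers and let f be defined by f(x) = sin(πMx/2)/sin(πx/2) for x ∈ (0, 2/M] and f(0) = M. Then for every δ ∈ [0, 1/L], sin(πM/(2L))/sin(π/(2L)) ≤ f(δ) ≤ M. -/
noncomputable def Ssum (M : ℕ) (x : ℝ) : ℝ :=
  ∑ k ∈ Finset.range M, Real.cos ((2 * (k : ℝ) + 1 - M) * x)

lemma sin_mul_Ssum (M : ℕ) (x : ℝ) :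
    Real.sin x * Ssum M x = Real.sin (M * x) := by
  have tele := Finset.sum_range_sub
    (fun k : ℕ => Real.sin ((2 * (k : ℝ) - M) * x) / 2) M
  unfold Ssum
  rw [Finset.mul_sum]
  have key : ∀ k : ℕ, Real.sin x * Real.cos ((2 * (k : ℝ) + 1 - M) * x)
      = Real.sin ((2 * ((k + 1 : ℕ) : ℝ) - M) * x) / 2
        - Real.sin ((2 * (k : ℝ) - M) * x) / 2 := by
    intro k
    have e1 : (2 * ((k + 1 : ℕ) : ℝ) - M) * x
        = x + (2 * (k : ℝ) + 1 - M) * x := by push_cast; ring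
    have e2 : (2 * (k : ℝ) - M) * x = -(x - (2 * (k : ℝ) + 1 - M) * x) := by ring
    rw [e1, e2, Real.sin_neg, Real.sin_add, Real.sin_sub]
    ring
  rw [Finset.sum_congr rfl (fun k _ => key k), tele]
  have e3 : (2 * (M : ℝ) - M) * x = M * x := by ring
  have e4 : (2 * ((0 : ℕ) : ℝ) - M) * x = -(M * x) := by push_cast; ring
  rw [e3, e4, Real.sin_neg]
  ring

lemma Ssum_le (M : ℕ) (x : ℝ) : Ssum M x ≤ M := by
  calc Ssum M x ≤ ∑ _k ∈ Finset.range M, (1 : ℝ) :=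
        Finset.sum_le_sum (fun k _ => Real.cos_le_one _)
    _ = M := by simp

lemma Ssum_anti (M : ℕ) {x y : ℝ} (hx : 0 ≤ x) (hxy : x ≤ y)
    (hy : (M - 1 : ℝ) * y ≤ Real.pi) : Ssum M y ≤ Ssum M x := by
  apply Finset.sum_le_sum
  intro k hk
  have hkM : (k : ℝ) ≤ (M : ℝ) - 1 := by
    have := Finset.mem_range.mp hk
    have : (k : ℝ) + 1 ≤ M := by exact_mod_cast this
    linarith
  set c : ℝ := 2 * (k : ℝ) + 1 - M with hc
  have hcabs : |c| ≤ (M : ℝ) - 1 := by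
    rw [abs_le]
    constructor <;> [skip; skip] <;>
      · simp only [hc]
        push_cast
        nlinarith [Nat.cast_nonneg (α := ℝ) k]
  have hM1 : (0 : ℝ) ≤ (M : ℝ) - 1 := le_trans (abs_nonneg c) hcabs
  have hy0 : 0 ≤ y := le_trans hx hxy
  have h1 : Real.cos (c * y) = Real.cos (|c| * y) := by
    rcases abs_cases c with ⟨h, _⟩ | ⟨h, _⟩
    · rw [h]
    · rw [h, neg_mul, Real.cos_neg]
  have h2 : Real.cos (c * x) = Real.cos (|c| * x) := by
    rcases abs_cases c with ⟨h, _⟩ | ⟨h, _⟩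
    · rw [h]
    · rw [h, neg_mul, Real.cos_neg]
  rw [h1, h2]
  apply Real.cos_le_cos_of_nonneg_of_le_pi
  · positivity
  · calc |c| * y ≤ ((M : ℝ) - 1) * y := by
          apply mul_le_mul_of_nonneg_right hcabs hy0
      _ ≤ Real.pi := hy
  · exact mul_le_mul_of_nonneg_left hxy (abs_nonneg c)

/-- For an `L`-beam DFT codebook with `L ≥ M ≥ 2`, the beamforming gain
`f(δ) = sin(πMδ/2)/sin(πδ/2)` (with `f(0) = M`) satisfies
`sin(πM/(2L))/sin(π/(2L)) ≤ f(δ) ≤ M` for every `δ ∈ [0, 1/L]`. -/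
theorem stmt_2 (M L : ℕ) (hM : 2 ≤ M) (hML : M ≤ L) (f : ℝ → ℝ)
    (hf : ∀ x ∈ Set.Ioc (0 : ℝ) (2 / (M : ℝ)),
      f x = Real.sin (Real.pi * (M : ℝ) * x / 2) / Real.sin (Real.pi * x / 2))
    (hf0 : f 0 = (M : ℝ)) :
    ∀ δ ∈ Set.Icc (0 : ℝ) (1 / (L : ℝ)),
      Real.sin (Real.pi * (M : ℝ) / (2 * (L : ℝ))) / Real.sin (Real.pi / (2 * (L : ℝ))) ≤ f δ ∧
      f δ ≤ (M : ℝ) := by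
  intro δ hδ
  obtain ⟨hδ0, hδL⟩ := hδ
  have hL2 : (2 : ℝ) ≤ (L : ℝ) := by exact_mod_cast le_trans hM hML
  have hM2 : (2 : ℝ) ≤ (M : ℝ) := by exact_mod_cast hM
  have hML' : (M : ℝ) ≤ (L : ℝ) := by exact_mod_cast hML
  have hLpos : (0 : ℝ) < L := by linarith
  have hMpos : (0 : ℝ) < M := by linarith
  have hpi := Real.pi_pos
  set y : ℝ := Real.pi / (2 * L) with hy
  have hy0 : 0 < y := by positivity
  have hylt : y < Real.pi := by
    rw [hy, div_lt_iff₀ (by linarith)]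
    nlinarith
  have hsy : 0 < Real.sin y := Real.sin_pos_of_pos_of_lt_pi hy0 hylt
  have hMy : Real.pi * (M : ℝ) / (2 * (L : ℝ)) = M * y := by
    rw [hy]; ring
  have hconst : Real.sin (Real.pi * (M : ℝ) / (2 * (L : ℝ))) / Real.sin y = Ssum M y := by
    rw [hMy, ← sin_mul_Ssum M y, mul_comm, mul_div_assoc, div_self (ne_of_gt hsy), mul_one]
  have hMy_pi : ((M : ℝ) - 1) * y ≤ Real.pi := by
    rw [hy, ← mul_div_assoc, div_le_iff₀ (by positivity)]
    nlinarith
  rcases eq_or_lt_of_le hδ0 with h0 | h0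
  · rw [← h0, hf0]
    refine ⟨?_, le_refl _⟩
    rw [hconst]
    exact Ssum_le M y
  · -- δ > 0
    set x : ℝ := Real.pi * δ / 2 with hx
    have hx0 : 0 < x := by positivity
    have hxy : x ≤ y := by
      rw [hx, hy, div_le_div_iff₀ (by norm_num) (by linarith)]
      have : δ * L ≤ 1 := by
        rw [le_div_iff₀ hLpos] at hδL
        linarith
      nlinarith
    have hδ2M : δ ≤ 2 / (M : ℝ) := by
      have h1 : (1 : ℝ) / L ≤ 2 / M := by
        rw [div_le_div_iff₀ hLpos hMpos]
        linarith
      linarith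
    have hfδ := hf δ ⟨h0, hδ2M⟩
    have hxlt : x < Real.pi := lt_of_le_of_lt hxy hylt
    have hsx : 0 < Real.sin x := Real.sin_pos_of_pos_of_lt_pi hx0 hxlt
    have hMx : Real.pi * (M : ℝ) * δ / 2 = M * x := by rw [hx]; ring
    have hxx : Real.pi * δ / 2 = x := rfl
    have hfval : f δ = Ssum M x := by
      rw [hfδ, hMx, hxx, ← sin_mul_Ssum M x, mul_comm, mul_div_assoc,
        div_self (ne_of_gt hsx), mul_one]
    rw [hfval]
    constructor
    · rw [hconst]
      exact Ssum_anti M (le_of_lt hx0) hxy hMy_pi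
    · exact Ssum_le M x
end

section
/- Let Θ ⊆ ℝ, and for each θ ∈ Θ let a(θ) ∈ ℂ^{M_s} with ‖a(θ)‖² = M_s and q(θ) ∈ ℂ^M with ‖q(θ)‖² = M. Let X ∈ ℂ^{M×L} satisfy X X^H = cL · I_M for some real c > 0, and set u(θ) = a(θ) q(θ)^T X. Then for every Y ∈ ℂ^{M_s×L} and every θ₁, θ₂ ∈ Θ: min_{α∈ℂ} ‖vec(Y) − α vec(u(θ₁))‖² ≤ min_{α∈ℂ} ‖vec(Y) − α vec(u(θ₂))‖² if and only if |a(θ₁)^H Y X^H conj(q(θ₁))|² ≥ |a(θ₂)^H Y X^H conj(q(θ₂))|². Hence the maximum-likelihood estimate of θ, which minimizes ‖vec(Y) − α vec(u(θ))‖² jointly over (θ, α), is exactly the maximizer of |a(θ)^H Y X^H conj(q(θ))|² over Θ. -/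
/-!
Completing the square in `α`, the best fit of `y` by a multiple of `u` leaves the residual
`‖y‖² - |⟪u, y⟫|² / ‖u‖²`. Under `X Xᴴ = cL · I` every `u(θ)` has the same squared Frobenius
norm `M_s · cL · M`, so comparing residuals across angles amounts to comparing
`|⟪vec u(θ), vec Y⟫|² = |a(θ)ᴴ Y Xᴴ conj q(θ)|²`.
-/

open Matrix
open scoped InnerProductSpace

section LineFit

variable (𝕜 : Type*) {E : Type*} [RCLike 𝕜] [NormedAddCommGroup E] [InnerProductSpace 𝕜 E]

/-- At `u = 0` the junk value `0 / 0 = 0` gives `‖y‖²`, which is still the right residual. -/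
noncomputable def lineResidual (u y : E) : ℝ :=
  ‖y‖ ^ 2 - ‖⟪u, y⟫_𝕜‖ ^ 2 / ‖u‖ ^ 2

variable {𝕜}

theorem norm_sq_mul_norm_sub_smul_sq (u y : E) (α : 𝕜) :
    ‖u‖ ^ 2 * ‖y - α • u‖ ^ 2
      = ‖u‖ ^ 2 * ‖y‖ ^ 2 - ‖⟪u, y⟫_𝕜‖ ^ 2 + ‖((‖u‖ ^ 2 : ℝ) : 𝕜) * α - ⟪u, y⟫_𝕜‖ ^ 2 := by
  have hconj : ⟪u, y⟫_𝕜 * starRingEnd 𝕜 (((‖u‖ ^ 2 : ℝ) : 𝕜) * α)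
      = ((‖u‖ ^ 2 : ℝ) : 𝕜) * starRingEnd 𝕜 (α * ⟪y, u⟫_𝕜) := by
    rw [← inner_conj_symm u y, map_mul, map_mul, RCLike.conj_ofReal]
    ring
  rw [@norm_sub_sq 𝕜, @norm_sub_sq 𝕜 𝕜, norm_smul, norm_mul, RCLike.inner_apply, hconj,
    inner_smul_right, RCLike.re_ofReal_mul, RCLike.conj_re, RCLike.norm_ofReal,
    abs_of_nonneg (by positivity)]
  ring

theorem isLeast_lineResidual (u y : E) :
    IsLeast (Set.range fun α : 𝕜 => ‖y - α • u‖ ^ 2) (lineResidual 𝕜 u y) := by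
  rcases eq_or_ne u 0 with rfl | hu
  · simp [lineResidual, isLeast_singleton]
  have hr : 0 < ‖u‖ ^ 2 := by positivity
  have hsplit (α : 𝕜) : ‖y - α • u‖ ^ 2
      = lineResidual 𝕜 u y + ‖((‖u‖ ^ 2 : ℝ) : 𝕜) * α - ⟪u, y⟫_𝕜‖ ^ 2 / ‖u‖ ^ 2 := by
    rw [lineResidual]
    field_simp
    linear_combination norm_sq_mul_norm_sub_smul_sq u y α
  refine ⟨⟨⟪u, y⟫_𝕜 / ((‖u‖ ^ 2 : ℝ) : 𝕜), ?_⟩, ?_⟩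
  · dsimp only
    rw [hsplit, mul_div_cancel₀ _ (by exact_mod_cast hr.ne'), sub_self]
    simp
  · rintro _ ⟨α, rfl⟩
    dsimp only
    rw [hsplit]
    exact le_add_of_nonneg_right (by positivity)

theorem iInf_norm_sub_smul_sq (u y : E) :
    ⨅ α : 𝕜, ‖y - α • u‖ ^ 2 = lineResidual 𝕜 u y :=
  (isLeast_lineResidual u y).isGLB.ciInf_eq

theorem lineResidual_le_lineResidual_iff {u₁ u₂ : E} (h : ‖u₁‖ = ‖u₂‖) (y : E) :
    lineResidual 𝕜 u₁ y ≤ lineResidual 𝕜 u₂ y ↔ ‖⟪u₂, y⟫_𝕜‖ ^ 2 ≤ ‖⟪u₁, y⟫_𝕜‖ ^ 2 := by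
  rw [lineResidual, lineResidual, sub_le_sub_iff_left, h]
  rcases (norm_nonneg u₂).eq_or_lt with h0 | hpos
  · rw [norm_eq_zero.mp h0.symm, norm_eq_zero.mp (h.trans h0.symm)]
    simp
  · exact div_le_div_iff_of_pos_right (by positivity)

theorem iInf_norm_sub_smul_sq_le_iff {u₁ u₂ : E} (h : ‖u₁‖ = ‖u₂‖) (y : E) :
    (⨅ α : 𝕜, ‖y - α • u₁‖ ^ 2) ≤ (⨅ α : 𝕜, ‖y - α • u₂‖ ^ 2)
      ↔ ‖⟪u₂, y⟫_𝕜‖ ^ 2 ≤ ‖⟪u₁, y⟫_𝕜‖ ^ 2 := by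
  rw [iInf_norm_sub_smul_sq, iInf_norm_sub_smul_sq]
  exact lineResidual_le_lineResidual_iff h y

theorem exists_forall_norm_sub_smul_sq_le_iff {ι : Type*} {u : ι → E} {S : Set ι}
    (hS : ∀ θ₁ ∈ S, ∀ θ₂ ∈ S, ‖u θ₁‖ = ‖u θ₂‖) (y : E) {θ₀ : ι} (h₀ : θ₀ ∈ S) :
    (∃ α₀ : 𝕜, ∀ θ ∈ S, ∀ α : 𝕜, ‖y - α₀ • u θ₀‖ ^ 2 ≤ ‖y - α • u θ‖ ^ 2)
      ↔ ∀ θ ∈ S, ‖⟪u θ, y⟫_𝕜‖ ^ 2 ≤ ‖⟪u θ₀, y⟫_𝕜‖ ^ 2 := by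
  have hres (θ : ι) := isLeast_lineResidual (𝕜 := 𝕜) (u θ) y
  constructor
  · rintro ⟨α₀, h⟩ θ hθ
    obtain ⟨α, hα⟩ := (hres θ).1
    rw [← lineResidual_le_lineResidual_iff (hS θ₀ h₀ θ hθ)]
    calc lineResidual 𝕜 (u θ₀) y ≤ ‖y - α₀ • u θ₀‖ ^ 2 := (hres θ₀).2 ⟨α₀, rfl⟩
      _ ≤ ‖y - α • u θ‖ ^ 2 := h θ hθ α
      _ = lineResidual 𝕜 (u θ) y := hα
  · intro h
    obtain ⟨α₀, hα₀⟩ := (hres θ₀).1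
    refine ⟨α₀, fun θ hθ α => ?_⟩
    calc ‖y - α₀ • u θ₀‖ ^ 2 = lineResidual 𝕜 (u θ₀) y := hα₀
      _ ≤ lineResidual 𝕜 (u θ) y := (lineResidual_le_lineResidual_iff (hS θ₀ h₀ θ hθ) y).2 (h θ hθ)
      _ ≤ ‖y - α • u θ‖ ^ 2 := (hres θ).2 ⟨α, rfl⟩

end LineFit

namespace Matrix

variable {𝕜 m n : Type*} [RCLike 𝕜] [Fintype m] [Fintype n]

theorem ofReal_sum_norm_sq {ι : Type*} [Fintype ι] (w : ι → 𝕜) :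
    ((∑ i, ‖w i‖ ^ 2 : ℝ) : 𝕜) = w ⬝ᵥ star w := by
  push_cast
  simp only [dotProduct, Pi.star_apply, RCLike.star_def, RCLike.mul_conj]

theorem sum_norm_vecMul_sq_of_mul_conjTranspose_eq [DecidableEq m] {X : Matrix m n 𝕜} {s : ℝ}
    (hX : X * Xᴴ = (s : 𝕜) • 1) (v : m → 𝕜) :
    ∑ j, ‖(v ᵥ* X) j‖ ^ 2 = s * ∑ i, ‖v i‖ ^ 2 := by
  apply RCLike.ofReal_injective (K := 𝕜)
  rw [RCLike.ofReal_mul, ofReal_sum_norm_sq, ofReal_sum_norm_sq, star_vecMul, dotProduct_mulVec,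
    vecMul_vecMul, hX, vecMul_smul, vecMul_one, smul_dotProduct, smul_eq_mul]

def euclideanVec (A : Matrix m n 𝕜) : EuclideanSpace 𝕜 (n × m) :=
  WithLp.toLp 2 A.vec

theorem norm_euclideanVec_sq (A : Matrix m n 𝕜) :
    ‖A.euclideanVec‖ ^ 2 = ∑ i, ∑ j, ‖A i j‖ ^ 2 := by
  rw [euclideanVec, EuclideanSpace.norm_sq_eq, Fintype.sum_prod_type, Finset.sum_comm]
  rfl

theorem norm_euclideanVec_sub_smul_sq (Y U : Matrix m n 𝕜) (α : 𝕜) :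
    ‖Y.euclideanVec - α • U.euclideanVec‖ ^ 2 = ∑ i, ∑ j, ‖Y i j - α * U i j‖ ^ 2 :=
  norm_euclideanVec_sq (Y - α • U)

theorem norm_euclideanVec_vecMulVec_sq (a : m → 𝕜) (b : n → 𝕜) :
    ‖(vecMulVec a b).euclideanVec‖ ^ 2 = (∑ i, ‖a i‖ ^ 2) * ∑ j, ‖b j‖ ^ 2 := by
  simp only [norm_euclideanVec_sq, vecMulVec_apply, norm_mul, mul_pow, Finset.sum_mul_sum]

theorem inner_euclideanVec_vecMulVec (a : m → 𝕜) (b : n → 𝕜) (Y : Matrix m n 𝕜) :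
    ⟪(vecMulVec a b).euclideanVec, Y.euclideanVec⟫_𝕜 = star a ⬝ᵥ Y *ᵥ star b := by
  simp only [euclideanVec, EuclideanSpace.inner_toLp_toLp, dotProduct, Fintype.sum_prod_type,
    mulVec, Finset.mul_sum]
  rw [Finset.sum_comm]
  simp only [vec, Pi.star_apply, vecMulVec_apply, star_mul']
  exact Finset.sum_congr rfl fun _ _ => Finset.sum_congr rfl fun _ _ => by ring

end Matrix

theorem stmt_12_general (Ms M L : ℕ) (Θ : Set ℝ)
    (aF : ℝ → Fin Ms → ℂ) (qF : ℝ → Fin M → ℂ)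
    (ha : ∀ θ ∈ Θ, ∑ i, ‖aF θ i‖ ^ 2 = (Ms : ℝ))
    (hq : ∀ θ ∈ Θ, ∑ j, ‖qF θ j‖ ^ 2 = (M : ℝ))
    (X : Matrix (Fin M) (Fin L) ℂ) (c : ℝ)
    (hX : X * X.conjTranspose = ((c * (L : ℝ) : ℝ) : ℂ) • (1 : Matrix (Fin M) (Fin M) ℂ))
    (u : ℝ → Matrix (Fin Ms) (Fin L) ℂ)
    (hu : ∀ θ, u θ = Matrix.vecMulVec (aF θ) (qF θ) * X)
    (Y : Matrix (Fin Ms) (Fin L) ℂ) :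
    (∀ θ₁ ∈ Θ, ∀ θ₂ ∈ Θ,
      ((⨅ α : ℂ, ∑ i, ∑ j, ‖Y i j - α * u θ₁ i j‖ ^ 2)
          ≤ (⨅ α : ℂ, ∑ i, ∑ j, ‖Y i j - α * u θ₂ i j‖ ^ 2) ↔
        ‖star (aF θ₂) ⬝ᵥ ((Y * X.conjTranspose) *ᵥ star (qF θ₂))‖ ^ 2
          ≤ ‖star (aF θ₁) ⬝ᵥ ((Y * X.conjTranspose) *ᵥ star (qF θ₁))‖ ^ 2)) ∧
    (∀ θ₀ ∈ Θ,
      ((∃ α₀ : ℂ, ∀ θ ∈ Θ, ∀ α : ℂ,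
          ∑ i, ∑ j, ‖Y i j - α₀ * u θ₀ i j‖ ^ 2 ≤ ∑ i, ∑ j, ‖Y i j - α * u θ i j‖ ^ 2) ↔
        (∀ θ ∈ Θ, ‖star (aF θ) ⬝ᵥ ((Y * X.conjTranspose) *ᵥ star (qF θ))‖ ^ 2
          ≤ ‖star (aF θ₀) ⬝ᵥ ((Y * X.conjTranspose) *ᵥ star (qF θ₀))‖ ^ 2))) := by
  have hu' (θ : ℝ) : u θ = vecMulVec (aF θ) (qF θ ᵥ* X) := by rw [hu, vecMulVec_mul]
  have hres (θ : ℝ) (α : ℂ) : ∑ i, ∑ j, ‖Y i j - α * u θ i j‖ ^ 2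
      = ‖Y.euclideanVec - α • (u θ).euclideanVec‖ ^ 2 :=
    (norm_euclideanVec_sub_smul_sq _ _ _).symm
  have hinner (θ : ℝ) : star (aF θ) ⬝ᵥ ((Y * Xᴴ) *ᵥ star (qF θ))
      = ⟪(u θ).euclideanVec, Y.euclideanVec⟫_ℂ := by
    rw [hu', inner_euclideanVec_vecMulVec, star_vecMul, mulVec_mulVec]
  have hnorm_sq : ∀ θ ∈ Θ, ‖(u θ).euclideanVec‖ ^ 2 = Ms * (c * L * M) := fun θ hθ => by
    rw [hu', norm_euclideanVec_vecMulVec_sq, sum_norm_vecMul_sq_of_mul_conjTranspose_eq hX,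
      ha θ hθ, hq θ hθ]
    rfl
  have hnorm : ∀ θ₁ ∈ Θ, ∀ θ₂ ∈ Θ, ‖(u θ₁).euclideanVec‖ = ‖(u θ₂).euclideanVec‖ :=
    fun θ₁ h₁ θ₂ h₂ => by
      rw [← sq_eq_sq₀ (norm_nonneg _) (norm_nonneg _), hnorm_sq θ₁ h₁, hnorm_sq θ₂ h₂]
  simp only [hres, hinner]
  exact ⟨fun θ₁ h₁ θ₂ h₂ => iInf_norm_sub_smul_sq_le_iff (hnorm θ₁ h₁ θ₂ h₂) _,
    fun θ₀ h₀ => exists_forall_norm_sub_smul_sq_le_iff hnorm _ h₀⟩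

/-- MLE equivalence (Theorem 1): with `u(θ) = a(θ) q(θ)^T X`, `‖a(θ)‖² = M_s`,
`‖q(θ)‖² = M`, `X X^H = cL · I_M`, comparing `min_α ‖vec(Y) − α vec(u(θ))‖²` at two angles
is equivalent to (reverse-)comparing `|a(θ)^H Y X^H conj(q(θ))|²`; hence the joint
minimizer over `(θ, α)` is exactly the maximizer of `|a(θ)^H Y X^H conj(q(θ))|²`. -/
theorem stmt_12 (Ms M L : ℕ) (Θ : Set ℝ)
    (aF : ℝ → Fin Ms → ℂ) (qF : ℝ → Fin M → ℂ)
    (ha : ∀ θ ∈ Θ, ∑ i, ‖aF θ i‖ ^ 2 = (Ms : ℝ))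
    (hq : ∀ θ ∈ Θ, ∑ j, ‖qF θ j‖ ^ 2 = (M : ℝ))
    (X : Matrix (Fin M) (Fin L) ℂ) (c : ℝ) (hc : 0 < c)
    (hX : X * X.conjTranspose = ((c * (L : ℝ) : ℝ) : ℂ) • (1 : Matrix (Fin M) (Fin M) ℂ))
    (u : ℝ → Matrix (Fin Ms) (Fin L) ℂ)
    (hu : ∀ θ, u θ = Matrix.vecMulVec (aF θ) (qF θ) * X)
    (Y : Matrix (Fin Ms) (Fin L) ℂ) :
    (∀ θ₁ ∈ Θ, ∀ θ₂ ∈ Θ,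
      ((⨅ α : ℂ, ∑ i, ∑ j, ‖Y i j - α * u θ₁ i j‖ ^ 2)
          ≤ (⨅ α : ℂ, ∑ i, ∑ j, ‖Y i j - α * u θ₂ i j‖ ^ 2) ↔
        ‖star (aF θ₂) ⬝ᵥ ((Y * X.conjTranspose) *ᵥ star (qF θ₂))‖ ^ 2
          ≤ ‖star (aF θ₁) ⬝ᵥ ((Y * X.conjTranspose) *ᵥ star (qF θ₁))‖ ^ 2)) ∧
    (∀ θ₀ ∈ Θ,
      ((∃ α₀ : ℂ, ∀ θ ∈ Θ, ∀ α : ℂ,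
          ∑ i, ∑ j, ‖Y i j - α₀ * u θ₀ i j‖ ^ 2 ≤ ∑ i, ∑ j, ‖Y i j - α * u θ i j‖ ^ 2) ↔
        (∀ θ ∈ Θ, ‖star (aF θ) ⬝ᵥ ((Y * X.conjTranspose) *ᵥ star (qF θ))‖ ^ 2
          ≤ ‖star (aF θ₀) ⬝ᵥ ((Y * X.conjTranspose) *ᵥ star (qF θ₀))‖ ^ 2))) :=
  stmt_12_general Ms M L Θ aF qF ha hq X c hX u hu Y
end

section
/- Let σ > 0, α ∈ ℂ with α ≠ 0, and v, v̇ ∈ ℂ^n with v ≠ 0 and v̇ ∉ ℂ·v (i.e., v̇ is not a complex scalar multiple of v). Define the 3×3 real symmetric matrix F by F_{ij} = (2/σ²) Re{d_i^H d_j} for i, j ∈ {1, 2, 3}, where d₁ = α v̇, d₂ = v, d₃ = i v. Then F is invertible and [F⁻¹]₁₁ = σ² / (2|α|² (‖v̇‖² − |v^H v̇|²/‖v‖²)). -/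
open Matrix

/-!
With `w = α v̇` and `a = ⟪v, w⟫`, the vectors `v` and `i v` are orthogonal for the real inner
product `Re ⟪·, ·⟫`, so `σ² F / 2` is the arrowhead matrix
`[‖w‖², Re a, Im a; Re a, ‖v‖², 0; Im a, 0, ‖v‖²]`. Its `(1,1)` cofactor is `‖v‖⁴` and its
determinant `‖v‖² (‖w‖² ‖v‖² - |a|²)` is positive by the strict Cauchy-Schwarz inequality,
as `v̇` is not a multiple of `v`.
-/

theorem norm_inner_lt_norm_mul_norm_of_forall_ne_smul {𝕜 E : Type*} [RCLike 𝕜]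
    [NormedAddCommGroup E] [InnerProductSpace 𝕜 E] {x y : E} (hx : x ≠ 0)
    (h : ∀ r : 𝕜, y ≠ r • x) : ‖(inner 𝕜 x y : 𝕜)‖ < ‖x‖ * ‖y‖ := by
  have hy : y ≠ 0 := by simpa using h 0
  refine (norm_inner_le_norm x y).lt_of_ne fun heq => ?_
  obtain ⟨r, -, hr⟩ := (norm_inner_eq_norm_iff hx hy).1 heq
  exact h r hr

section Arrowhead

variable {K : Type*} [Field K]

theorem det_arrowhead (A B x y : K) :
    (!![A, x, y; x, B, 0; y, 0, B]).det = B * (A * B - x ^ 2 - y ^ 2) := by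
  simp only [det_fin_three, of_apply, cons_val', cons_val_zero, cons_val_one, cons_val,
    cons_val_fin_one]
  ring

/-- For a singular matrix both sides are junk zeros (`Ring.inverse 0 = 0`, `B / 0 = 0`). -/
theorem inv_arrowhead_zero_zero (A B x y : K) :
    (!![A, x, y; x, B, 0; y, 0, B])⁻¹ 0 0 = B / (A * B - x ^ 2 - y ^ 2) := by
  rw [inv_def, Matrix.smul_apply, adjugate_fin_three, det_arrowhead, Ring.inverse_eq_inv']
  simp only [of_apply, cons_val', cons_val_zero, cons_val_one, cons_val, cons_val_fin_one,
    mul_zero, sub_zero, smul_eq_mul]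
  rcases eq_or_ne B 0 with hB | hB
  · simp [hB]
  · field_simp

end Arrowhead

theorem re_inner_gram_eq_arrowhead {E : Type*} [NormedAddCommGroup E] [InnerProductSpace ℂ E]
    (w v : E) :
    (of fun i j => (inner ℂ (![w, v, Complex.I • v] i) (![w, v, Complex.I • v] j) : ℂ).re) =
      !![‖w‖ ^ 2, (inner ℂ v w : ℂ).re, (inner ℂ v w : ℂ).im;
        (inner ℂ v w : ℂ).re, ‖v‖ ^ 2, 0;
        (inner ℂ v w : ℂ).im, 0, ‖v‖ ^ 2] := by
  have hre : (inner ℂ w v : ℂ).re = (inner ℂ v w : ℂ).re := inner_re_symm (𝕜 := ℂ) w v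
  have him : (inner ℂ w v : ℂ).im = -(inner ℂ v w : ℂ).im := inner_im_symm (𝕜 := ℂ) w v
  ext i j
  fin_cases i <;> fin_cases j <;>
    simp [inner_self_eq_norm_sq_to_K, ← Complex.ofReal_pow, norm_smul, hre, him]

/-- Cramer-Rao bound (Theorem 2): with `d₁ = α v̇`, `d₂ = v`, `d₃ = i v`,
`F_{ij} = (2/σ²) Re{d_i^H d_j}`, if `α ≠ 0`, `v ≠ 0`, and `v̇` is not a complex multiple of `v`,
then `F` is invertible and `[F⁻¹]₁₁ = σ² / (2|α|²(‖v̇‖² − |v^H v̇|²/‖v‖²))`. -/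
theorem stmt_14 (n : ℕ) (σ : ℝ) (hσ : 0 < σ) (α : ℂ) (hα : α ≠ 0)
    (v vdot : EuclideanSpace ℂ (Fin n)) (hv : v ≠ 0)
    (hlin : ∀ z : ℂ, vdot ≠ z • v)
    (d : Fin 3 → EuclideanSpace ℂ (Fin n))
    (hd : d = ![α • vdot, v, Complex.I • v])
    (F : Matrix (Fin 3) (Fin 3) ℝ)
    (hF : ∀ i j, F i j = 2 / σ ^ 2 * (inner ℂ (d i) (d j) : ℂ).re) :
    IsUnit F ∧
    F⁻¹ 0 0 = σ ^ 2 / (2 * ‖α‖ ^ 2 * (‖vdot‖ ^ 2 - ‖(inner ℂ v vdot : ℂ)‖ ^ 2 / ‖v‖ ^ 2)) := by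
  subst hd
  set c : ℝ := 2 / σ ^ 2
  set a : ℂ := inner ℂ v (α • vdot)
  have hF_gram : F = c • of fun i j =>
      (inner ℂ (![α • vdot, v, Complex.I • v] i) (![α • vdot, v, Complex.I • v] j) : ℂ).re := by
    ext i j
    exact hF i j
  rw [re_inner_gram_eq_arrowhead] at hF_gram
  simp only [smul_of, smul_cons, smul_eq_mul, mul_zero, smul_empty] at hF_gram
  set p : ℂ := inner ℂ v vdot
  have hgap : 0 < ‖v‖ ^ 2 * ‖vdot‖ ^ 2 - ‖p‖ ^ 2 := by
    rw [sub_pos, ← mul_pow]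
    exact pow_lt_pow_left₀ (norm_inner_lt_norm_mul_norm_of_forall_ne_smul hv hlin) (norm_nonneg _)
      two_ne_zero
  have hnorm_a : a.re ^ 2 + a.im ^ 2 = ‖α‖ ^ 2 * ‖p‖ ^ 2 := by
    rw [← mul_pow, ← norm_mul, ← inner_smul_right, Complex.sq_norm, Complex.normSq_apply]
    ring
  have hdet_factor : c * ‖α • vdot‖ ^ 2 * (c * ‖v‖ ^ 2) - (c * a.re) ^ 2 - (c * a.im) ^ 2 =
      c ^ 2 * ‖α‖ ^ 2 * (‖v‖ ^ 2 * ‖vdot‖ ^ 2 - ‖p‖ ^ 2) := by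
    rw [norm_smul]
    linear_combination (-c ^ 2) * hnorm_a
  constructor
  · rw [isUnit_iff_isUnit_det, hF_gram, det_arrowhead, hdet_factor]
    exact isUnit_iff_ne_zero.2 (by positivity)
  · rw [hF_gram, inv_arrowhead_zero_zero, hdet_factor]
    simp only [c]
    field_simp
end

section
/- Let σ > 0, α_s ∈ ℂ, and c > 0. Let a, ȧ ∈ ℂ^{M_s} with ‖a‖² = M_s and a^H ȧ = 0, let q, q̇ ∈ ℂ^M with ‖q‖² = M and q^H q̇ = 0, and suppose M ‖ȧ‖² + M_s ‖q̇‖² > 0. Let X ∈ ℂ^{M×L} satisfy X X^H = cL · I_M, and define u = a q^T X and u̇ = ȧ q^T X + a q̇^T X. Then σ² / (2|α_s|² (tr(u̇ u̇^H) − |tr(u u̇^H)|²/tr(u u^H))) = σ² / (2 cL |α_s|² (M ‖ȧ‖² + M_s ‖q̇‖²)). -/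
open Matrix


lemma tr_aux {Ms M L : ℕ} (c : ℝ) (X : Matrix (Fin M) (Fin L) ℂ)
    (hX : X * X.conjTranspose = ((c * (L : ℝ) : ℝ) : ℂ) • (1 : Matrix (Fin M) (Fin M) ℂ))
    (a b : Fin Ms → ℂ) (q p : Fin M → ℂ) :
    Matrix.trace (Matrix.vecMulVec a q * X * (Matrix.vecMulVec b p * X).conjTranspose)
      = ((c * (L : ℝ) : ℝ) : ℂ) * (star b ⬝ᵥ a) * (star p ⬝ᵥ q) := by
  have h1 : Matrix.vecMulVec a q * X * (Matrix.vecMulVec b p * X).conjTranspose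
      = Matrix.vecMulVec a q * (X * X.conjTranspose) * (Matrix.vecMulVec b p).conjTranspose := by
    simp only [conjTranspose_mul, Matrix.mul_assoc]
  rw [h1, hX]
  simp only [Matrix.mul_smul, Matrix.smul_mul, Matrix.mul_one, Matrix.trace_smul, smul_eq_mul]
  rw [mul_assoc]
  congr 1
  simp only [Matrix.trace, Matrix.diag_apply, Matrix.mul_apply, Matrix.vecMulVec_apply,
    Matrix.conjTranspose_apply, dotProduct, Pi.star_apply]
  rw [Finset.sum_mul_sum]
  apply Finset.sum_congr rfl
  intro i _
  apply Finset.sum_congr rfl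
  intro j _
  simp only [StarMul.star_mul]; ring

lemma norm_dot {n : ℕ} (a : Fin n → ℂ) : star a ⬝ᵥ a = ((∑ i, ‖a i‖ ^ 2 : ℝ) : ℂ) := by
  push_cast
  simp [dotProduct, Complex.conj_mul', Complex.normSq_eq_norm_sq, Complex.sq_norm]


/-- Simplified CRB for the STAS protocol:
`σ²/(2|α_s|²(tr(u̇u̇^H) − |tr(uu̇^H)|²/tr(uu^H))) = σ²/(2cL|α_s|²(M‖ȧ‖² + M_s‖q̇‖²))`. -/
theorem stmt_17 (Ms M L : ℕ) (σ : ℝ) (hσ : 0 < σ) (αs : ℂ) (c : ℝ) (hc : 0 < c)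
    (a adot : Fin Ms → ℂ) (hanorm : ∑ i, ‖a i‖ ^ 2 = (Ms : ℝ)) (ha : star a ⬝ᵥ adot = 0)
    (q qdot : Fin M → ℂ) (hqnorm : ∑ j, ‖q j‖ ^ 2 = (M : ℝ)) (hq : star q ⬝ᵥ qdot = 0)
    (hpos : 0 < (M : ℝ) * (∑ i, ‖adot i‖ ^ 2) + (Ms : ℝ) * (∑ j, ‖qdot j‖ ^ 2))
    (X : Matrix (Fin M) (Fin L) ℂ)
    (hX : X * X.conjTranspose = ((c * (L : ℝ) : ℝ) : ℂ) • (1 : Matrix (Fin M) (Fin M) ℂ))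
    (u udot : Matrix (Fin Ms) (Fin L) ℂ)
    (hu : u = Matrix.vecMulVec a q * X)
    (hudot : udot = Matrix.vecMulVec adot q * X + Matrix.vecMulVec a qdot * X) :
    ((σ ^ 2 : ℝ) : ℂ) / (2 * ((‖αs‖ ^ 2 : ℝ) : ℂ) *
        (Matrix.trace (udot * udot.conjTranspose)
          - ((‖Matrix.trace (u * udot.conjTranspose)‖ ^ 2 : ℝ) : ℂ)
              / Matrix.trace (u * u.conjTranspose)))
      = ((σ ^ 2 : ℝ) : ℂ) / ((2 * c * (L : ℝ) * ‖αs‖ ^ 2 *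
          ((M : ℝ) * (∑ i, ‖adot i‖ ^ 2) + (Ms : ℝ) * (∑ j, ‖qdot j‖ ^ 2)) : ℝ) : ℂ) := by
  have haa : star a ⬝ᵥ a = ((Ms : ℝ) : ℂ) := by rw [norm_dot, hanorm]
  have hqq : star q ⬝ᵥ q = ((M : ℝ) : ℂ) := by rw [norm_dot, hqnorm]
  have ha' : star adot ⬝ᵥ a = 0 := by
    simpa [dotProduct, mul_comm] using congrArg star ha
  have hq' : star qdot ⬝ᵥ q = 0 := by
    simpa [dotProduct, mul_comm] using congrArg star hq
  have t1 : Matrix.trace (u * udot.conjTranspose) = 0 := by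
    rw [hu, hudot, conjTranspose_add, Matrix.mul_add, Matrix.trace_add,
      tr_aux c X hX a adot q q, tr_aux c X hX a a q qdot, ha', hq']
    ring
  have t2 : Matrix.trace (udot * udot.conjTranspose)
      = ((c * (L : ℝ) : ℝ) : ℂ) * (((M : ℝ) : ℂ) * ((∑ i, ‖adot i‖ ^ 2 : ℝ) : ℂ)
        + ((Ms : ℝ) : ℂ) * ((∑ j, ‖qdot j‖ ^ 2 : ℝ) : ℂ)) := by
    rw [hudot, conjTranspose_add, Matrix.mul_add, Matrix.add_mul, Matrix.add_mul,
      Matrix.trace_add, Matrix.trace_add, Matrix.trace_add,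
      tr_aux c X hX adot adot q q, tr_aux c X hX a adot qdot q,
      tr_aux c X hX adot a q qdot, tr_aux c X hX a a qdot qdot,
      ha, ha', hq, hq', haa, hqq, norm_dot adot, norm_dot qdot]
    ring
  rw [t1, t2]
  norm_num
  congr 1
  push_cast
  ring
end
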